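/- Let n, t, P be positive integers with 2 ≤ t ≤ √n, 6P ≤ n and P·t ≤ n. Then the number of patterns (e,v) ∈ E_n(t) for which at least one of the L = ⌊n/(3P)⌋ blocks of e contains two or more nonzero entries is at most (28·P·t²/n + 8·t⁴/(3·n·P))·#E_n(t). -/

import Mathlib

/-- The three kinds of deletable errors: deletion, erasure, substitution (flip). -/
inductive ErrKind : Type
  | D
  | E
  | F
  deriving DecidableEq

instance : Fintype ErrKind :=
  ⟨{ErrKind.D, ErrKind.E, ErrKind.F}, fun x => by cases x <;> first | decide | simp⟩

/-- A binary word of length `n`. -/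
abbrev Word (n : ℕ) := Fin n → Bool

/-- A deletable error pattern of length `n`: a pair `(e, v)`. -/
abbrev Pattern (n : ℕ) := (Fin n → Bool) × (Fin n → ErrKind)

/-- Process a list of (bit, error indicator, error kind) triples in order,
producing the corrupted string over `{0, 1, ε}` (`none` is the erasure symbol). -/
def corruptAux : List (Bool × Bool × ErrKind) → List (Option Bool)
  | [] => []
  | (xi, false, _) :: rest => some xi :: corruptAux rest
  | (_, true, ErrKind.D) :: rest => corruptAux rest
  | (_, true, ErrKind.E) :: rest => none :: corruptAux rest
  | (xi, true, ErrKind.F) :: rest => some (!xi) :: corruptAux rest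

/-- The corruption `F_g(x)` of the word `x` by the pattern `g`. -/
def corrupt {n : ℕ} (g : Pattern n) (x : Word n) : List (Option Bool) :=
  corruptAux (List.ofFn fun i => (x i, g.1 i, g.2 i))

/-- The corruption `F_g(x, t)` of the first `t` bits of `x` by the first `t` entries of `g`. -/
def corruptPrefix {n : ℕ} (g : Pattern n) (x : Word n) (t : ℕ) : List (Option Bool) :=
  corruptAux ((List.ofFn fun i => (x i, g.1 i, g.2 i)).take t)

/-- The number of errors `Σ_i e_i` of a pattern. -/
def errCount {n : ℕ} (g : Pattern n) : ℕ :=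
  (Finset.univ.filter fun i => g.1 i = true).card

/-- `E_n(r)`: the set of `n`-length deletable error patterns with at most `r` errors. -/
def Epat (n r : ℕ) : Finset (Pattern n) :=
  Finset.univ.filter fun g => errCount g ≤ r

/-- A pattern is `P`-far if any two distinct error positions are at distance at least `P`. -/
def IsPFar {n : ℕ} (P : ℕ) (g : Pattern n) : Prop :=
  ∀ i j : Fin n, i ≠ j → g.1 i = true → g.1 j = true →
    (P : ℤ) ≤ |((i : ℕ) : ℤ) - ((j : ℕ) : ℤ)|

/-- The code `C` corrects all error patterns in `F`. -/
def CorrectsIn {n : ℕ} (C : Finset (Word n)) (F : Set (Pattern n)) : Prop :=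
  ∀ x₁ ∈ C, ∀ x₂ ∈ C, x₁ ≠ x₂ → ∀ g₁ ∈ F, ∀ g₂ ∈ F, corrupt g₁ x₁ ≠ corrupt g₂ x₂

/-- The code `C` corrects all error patterns in `F` in real-time with delay at most `d`. -/
def CorrectsRealTime {n : ℕ} (C : Finset (Word n)) (F : Set (Pattern n)) (d : ℕ) : Prop :=
  ∀ z : ℕ, 1 ≤ z → z ≤ n - d → ∀ x₁ ∈ C, ∀ x₂ ∈ C, x₁ ≠ x₂ →
    ∀ g₁ ∈ F, ∀ g₂ ∈ F, corruptPrefix g₁ x₁ (z + d) ≠ corruptPrefix g₂ x₂ (z + d)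

/-- The redundancy `R(C) = n - log₂ #C` of an `n`-length code `C`. -/
noncomputable def redundancy {n : ℕ} (C : Finset (Word n)) : ℝ :=
  (n : ℝ) - Real.logb 2 (C.card)

/-- The number of nonzero entries of `e` in the `l`-th block (`1 ≤ l ≤ L`) of the decomposition
of `{0,1}^n` into `L` blocks, where blocks `1, …, L-1` have length `3P` and the last block
extends to position `n`. -/
def blockCount (n P L l : ℕ) (e : Fin n → Bool) : ℕ :=
  (Finset.univ.filter fun i : Fin n =>
    e i = true ∧ 3 * P * (l - 1) ≤ (i : ℕ) ∧ (l = L ∨ (i : ℕ) < 3 * P * l)).card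

/-! Two errors in the same block lie at distance less than `6P` (the last block is shorter than
`6P`). Clearing two given error positions maps the patterns of `E_n(t)` having errors there
injectively into `E_n(t-2)`, and there are at most `6Pn` such pairs of positions. Comparing the
binomial sums termwise, `#E_n(t-2) (n-t+1)(n-t+2) ≤ t(t-1) #E_n(t)`, and `(n-t+1)(n-t+2) ≥ n²/4`
because `t² ≤ n`; so there are at most `24Pt²/n · #E_n(t)` such patterns. -/

open Finset

lemma card_filter_card_true_eq {α : Type*} [Fintype α] [DecidableEq α] (k : ℕ) :
    #{e : α → Bool | #{i | e i = true} = k} = (Fintype.card α).choose k := by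
  rw [← card_univ, ← card_powersetCard]
  refine card_nbij' (fun e => ({i | e i = true} : Finset α)) (fun s i => decide (i ∈ s))
    ?_ ?_ ?_ ?_
  · intro e he; simpa using he
  · intro s hs; simpa using (mem_powersetCard.1 hs).2
  · intro e _; funext i; simp
  · intro s _; ext i; simp

lemma card_Epat (n r : ℕ) : #(Epat n r) = ∑ k ∈ range (r + 1), n.choose k * 3 ^ n := by
  rw [card_eq_sum_card_fiberwise (f := errCount) (s := Epat n r) (t := range (r + 1))
    (fun g hg => mem_range_succ_iff.2 (mem_filter.1 hg).2)]
  refine sum_congr rfl fun k hk => ?_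
  have hfib : {g ∈ Epat n r | errCount g = k} =
      ({e | #{i | e i = true} = k} : Finset (Fin n → Bool)) ×ˢ univ := by
    ext g
    rw [mem_filter, Epat, mem_filter, mem_product]
    simp only [errCount, mem_univ, true_and, mem_filter, and_true]
    exact and_iff_right_of_imp fun h => h ▸ mem_range_succ_iff.1 hk
  rw [hfib, card_product, card_filter_card_true_eq, card_univ, Fintype.card_fun,
    Fintype.card_fin]
  rfl

lemma Nat.choose_mul_le_choose_add_two {n k r : ℕ} (hkr : k ≤ r) :
    n.choose k * ((n - r - 1) * (n - r)) ≤ (r + 2) * (r + 1) * n.choose (k + 2) := by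
  have hchoose :
      n.choose (k + 2) * ((k + 2) * (k + 1)) = n.choose k * ((n - k - 1) * (n - k)) := by
    have h1 := Nat.choose_succ_right_eq n k
    have h2 := Nat.choose_succ_right_eq n (k + 1)
    rw [show n - (k + 1) = n - k - 1 by omega] at h2
    calc n.choose (k + 2) * ((k + 2) * (k + 1))
        = n.choose (k + 1 + 1) * (k + 1 + 1) * (k + 1) := by ring
      _ = n.choose k * ((n - k - 1) * (n - k)) := by rw [h2, mul_right_comm, h1]; ring
  refine Nat.le_of_mul_le_mul_right ?_ (show 0 < (k + 2) * (k + 1) by positivity)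
  calc n.choose k * ((n - r - 1) * (n - r)) * ((k + 2) * (k + 1))
      ≤ n.choose k * ((n - k - 1) * (n - k)) * ((r + 2) * (r + 1)) := by
        gcongr n.choose k * (?_ * ?_) * (?_ * ?_) <;> omega
    _ = (r + 2) * (r + 1) * n.choose (k + 2) * ((k + 2) * (k + 1)) := by rw [← hchoose]; ring

lemma card_Epat_mul_le (n r : ℕ) :
    #(Epat n r) * ((n - r - 1) * (n - r)) ≤ (r + 2) * (r + 1) * #(Epat n (r + 2)) := by
  rw [card_Epat, card_Epat, sum_mul, mul_sum, sum_range_succ' _ (r + 2), sum_range_succ' _ (r + 1)]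
  refine le_add_right (le_add_right (sum_le_sum fun k hk => ?_))
  have := Nat.choose_mul_le_choose_add_two (n := n) (mem_range_succ_iff.1 hk)
  calc n.choose k * 3 ^ n * ((n - r - 1) * (n - r))
      = n.choose k * ((n - r - 1) * (n - r)) * 3 ^ n := by ring
    _ ≤ (r + 2) * (r + 1) * n.choose (k + 2) * 3 ^ n := by gcongr
    _ = _ := by ring

lemma card_filter_update_false_add_one {α : Type*} [Fintype α] [DecidableEq α] {e : α → Bool}
    {i : α} (hi : e i = true) :
    #{x | Function.update e i false x = true} + 1 = #{x | e x = true} := by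
  have hfilter : ({x | Function.update e i false x = true} : Finset α) =
      ({x | e x = true} : Finset α).erase i := by
    ext x
    by_cases hx : x = i
    · subst hx; simp
    · simp [hx]
  rw [hfilter, card_erase_add_one (by simpa using hi)]

lemma card_Epat_filter_pair_le {n : ℕ} {i j : Fin n} (hij : i ≠ j) (r : ℕ) :
    #{g ∈ Epat n (r + 2) | g.1 i = true ∧ g.1 j = true} ≤ #(Epat n r) := by
  refine card_le_card_of_injOn
    (fun g => (Function.update (Function.update g.1 i false) j false, g.2)) ?_ ?_
  · rintro g hg
    simp only [mem_coe, Epat, mem_filter, mem_univ, true_and] at hg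
    obtain ⟨hcount, hi, hj⟩ := hg
    have hj' : Function.update g.1 i false j = true := by
      rwa [Function.update_of_ne hij.symm]
    have hremove_i := card_filter_update_false_add_one hi
    have hremove_j := card_filter_update_false_add_one hj'
    rw [mem_coe, Epat, mem_filter]
    simp only [errCount, mem_univ, true_and] at hcount ⊢
    omega
  · rintro g hg g' hg' hgg'
    simp only [mem_coe, mem_filter] at hg hg'
    simp only [Prod.mk.injEq] at hgg'
    refine Prod.ext (funext fun x => ?_) hgg'.2
    by_cases hxj : x = j
    · rw [hxj, hg.2.2, hg'.2.2]
    by_cases hxi : x = i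
    · rw [hxi, hg.2.1, hg'.2.1]
    simpa [Function.update_of_ne hxj, Function.update_of_ne hxi] using congrFun hgg'.1 x

def closePairs (n d : ℕ) : Finset (Fin n × Fin n) :=
  {p | p.1 < p.2 ∧ (p.2 : ℕ) < p.1 + d}

lemma card_closePairs_le (n d : ℕ) : #(closePairs n d) ≤ n * d := by
  calc #(closePairs n d) ≤ #((univ : Finset (Fin n)) ×ˢ range d) := by
        refine card_le_card_of_injOn (fun p => (p.1, (p.2 : ℕ) - p.1)) ?_ ?_
        · intro p hp
          simp only [closePairs, mem_coe, mem_filter, mem_univ, true_and] at hp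
          simp only [coe_product, coe_univ, coe_range, Set.mem_prod, Set.mem_univ,
            Set.mem_Iio, true_and]
          omega
        · intro p hp q hq hpq
          simp only [closePairs, mem_coe, mem_filter, mem_univ, true_and, Fin.lt_def] at hp hq
          simp only [Prod.mk.injEq] at hpq
          obtain ⟨h1, h2⟩ := hpq
          exact Prod.ext h1 (Fin.ext (by rw [h1] at h2; omega))
    _ = n * d := by simp

lemma exists_mem_closePairs_of_two_le_blockCount {n P L l : ℕ} {e : Fin n → Bool}
    (hL : n < 3 * P * (L + 1)) (h : 2 ≤ blockCount n P L l e) :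
    ∃ p ∈ closePairs n (6 * P), e p.1 = true ∧ e p.2 = true := by
  obtain ⟨i, hi, j, hj, hij⟩ := one_lt_card.1 h
  wlog hlt : i < j generalizing i j
  · exact this j hj i hi hij.symm (lt_of_le_of_ne (not_lt.1 hlt) hij.symm)
  simp only [mem_filter, mem_univ, true_and] at hi hj
  refine ⟨(i, j), ?_, hi.1, hj.1⟩
  simp only [closePairs, mem_filter, mem_univ, true_and]
  refine ⟨hlt, ?_⟩
  have hblock_end : 3 * P * l ≤ 3 * P * (l - 1) + 3 * P := by
    rw [← Nat.mul_succ]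
    exact Nat.mul_le_mul_left _ (by omega)
  have hlast : 3 * P * (l + 1) = 3 * P * l + 3 * P := Nat.mul_succ _ _
  rcases hj.2.2 with rfl | hjl <;> omega

def crowdedPatterns (n P t : ℕ) : Set (Pattern n) :=
  {g | g ∈ Epat n t ∧
    ∃ l : ℕ, 1 ≤ l ∧ l ≤ n / (3 * P) ∧ 2 ≤ blockCount n P (n / (3 * P)) l g.1}

lemma ncard_crowdedPatterns_le {n P : ℕ} (hP : 0 < P) (r : ℕ) :
    (crowdedPatterns n P (r + 2)).ncard ≤ n * (6 * P) * #(Epat n r) := by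
  calc _ ≤ #((closePairs n (6 * P)).biUnion
          fun p => {g ∈ Epat n (r + 2) | g.1 p.1 = true ∧ g.1 p.2 = true}) := by
        rw [← Set.ncard_coe_finset]
        refine Set.ncard_le_ncard ?_
        rintro g ⟨hg, l, -, -, hl⟩
        obtain ⟨p, hp, hp1, hp2⟩ := exists_mem_closePairs_of_two_le_blockCount
          (Nat.lt_mul_div_succ n (by positivity)) hl
        simp only [coe_biUnion, coe_filter, Set.mem_iUnion]
        exact ⟨p, hp, hg, hp1, hp2⟩
    _ ≤ ∑ p ∈ closePairs n (6 * P), #(Epat n r) :=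
        card_biUnion_le.trans <| sum_le_sum fun p hp =>
          card_Epat_filter_pair_le (mem_filter.1 hp).2.1.ne r
    _ ≤ n * (6 * P) * #(Epat n r) := by
        rw [sum_const, smul_eq_mul]
        exact Nat.mul_le_mul_right _ (card_closePairs_le n (6 * P))

lemma sq_le_four_mul_sub_one_mul_sub {n r : ℕ} (h : 2 * r + 2 ≤ n) :
    n ^ 2 ≤ 4 * ((n - r - 1) * (n - r)) :=
  calc n ^ 2 = n * n := sq n
    _ ≤ 2 * (n - r - 1) * (2 * (n - r)) := Nat.mul_le_mul (by omega) (by omega)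
    _ = 4 * ((n - r - 1) * (n - r)) := by ring

lemma ncard_crowdedPatterns_mul_le {n P r : ℕ} (hP : 0 < P) (hrn : (r + 2) ^ 2 ≤ n) :
    (crowdedPatterns n P (r + 2)).ncard * n ≤ 24 * P * (r + 2) ^ 2 * #(Epat n (r + 2)) := by
  have hbad := ncard_crowdedPatterns_le (n := n) hP r
  have hgrowth := card_Epat_mul_le n r
  have hdenom := sq_le_four_mul_sub_one_mul_sub (n := n) (r := r) (by nlinarith)
  set B := (crowdedPatterns n P (r + 2)).ncard
  set D := (n - r - 1) * (n - r)
  refine Nat.le_of_mul_le_mul_right ?_ (show 0 < n by nlinarith)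
  calc B * n * n = B * n ^ 2 := by ring
    _ ≤ n * (6 * P) * #(Epat n r) * (4 * D) := by gcongr
    _ = 24 * P * n * (#(Epat n r) * D) := by ring
    _ ≤ 24 * P * n * ((r + 2) * (r + 1) * #(Epat n (r + 2))) := by gcongr
    _ ≤ 24 * P * n * ((r + 2) * (r + 2) * #(Epat n (r + 2))) := by gcongr; omega
    _ = 24 * P * (r + 2) ^ 2 * #(Epat n (r + 2)) * n := by ring

theorem stmt13_general (n t P : ℕ) (ht : 2 ≤ t) (htn : (t : ℝ) ≤ Real.sqrt n)
    (hP : 0 < P) :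
    (({g : Pattern n | g ∈ Epat n t ∧
        ∃ l : ℕ, 1 ≤ l ∧ l ≤ n / (3 * P) ∧
          2 ≤ blockCount n P (n / (3 * P)) l g.1}).ncard : ℝ) ≤
      (28 * (P : ℝ) * t ^ 2 / n + 8 * t ^ 4 / (3 * n * (P : ℝ))) *
        ((Epat n t).card : ℝ) := by
  obtain ⟨r, rfl⟩ : ∃ r, t = r + 2 := ⟨t - 2, by omega⟩
  have hsq_le : (r + 2) ^ 2 ≤ n := by
    exact_mod_cast (Real.le_sqrt (by positivity) (by positivity)).1 htn
  have hn : (0 : ℝ) < n := by exact_mod_cast (show 0 < n by nlinarith)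
  calc ((crowdedPatterns n P (r + 2)).ncard : ℝ)
      ≤ 24 * P * ((r + 2 : ℕ) : ℝ) ^ 2 / n * #(Epat n (r + 2)) := by
        rw [div_mul_eq_mul_div, le_div_iff₀ hn]
        exact_mod_cast ncard_crowdedPatterns_mul_le hP hsq_le
    _ ≤ _ := by
        gcongr ?_ * _
        exact le_add_of_le_of_nonneg (by gcongr; norm_num) (by positivity)

/-- Bound on the number of patterns for which some block contains two or more errors. -/
theorem stmt13 (n t P : ℕ) (hn : 0 < n) (ht : 2 ≤ t) (htn : (t : ℝ) ≤ Real.sqrt n)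
    (hP : 0 < P) (h6P : 6 * P ≤ n) (hPt : P * t ≤ n) :
    (({g : Pattern n | g ∈ Epat n t ∧
        ∃ l : ℕ, 1 ≤ l ∧ l ≤ n / (3 * P) ∧
          2 ≤ blockCount n P (n / (3 * P)) l g.1}).ncard : ℝ) ≤
      (28 * (P : ℝ) * t ^ 2 / n + 8 * t ^ 4 / (3 * n * (P : ℝ))) *
        ((Epat n t).card : ℝ) :=
  stmt13_general n t P ht htn hP
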